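/- arXiv:1012.1018 — 2 statements merged into one kernel-verified Lean document; each statement's English description precedes it below -/
import Mathlib

section
/- If g ∈ GL(V) satisfies g{x,y,z} = {gx,gy,gz} for all x,y,z ∈ V, then ge is invertible and (ge)⁻¹ = (ge)⋆. -/
noncomputable section
open scoped Classical

open Function

variable {V : Type} [AddCommGroup V] [Module ℝ V]

/-- The quadratic representation `P(x) = 2 L(x)² − L(x²)`. -/
def Pq (mul : V →ₗ[ℝ] V →ₗ[ℝ] V) (x : V) : V →ₗ[ℝ] V :=
  2 • (mul x ∘ₗ mul x) - mul (mul x x)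

/-- The Jordan inverse `x⁻¹ = P(x)⁻¹ x` (junk value `0` when `x` is not invertible). -/
def jinv (mul : V →ₗ[ℝ] V →ₗ[ℝ] V) (x : V) : V :=
  if h : Function.Bijective (Pq mul x) then (LinearEquiv.ofBijective (Pq mul x) h).symm x else 0

/-- The trace form `α(x,y) = Tr L(xy)`. -/
def αf (mul : V →ₗ[ℝ] V →ₗ[ℝ] V) (x y : V) : ℝ :=
  LinearMap.trace ℝ V (mul (mul x y))

/-- The symmetric cone `Ω = {x² : x ∈ V⁺ invertible}`. -/
def omg (mul : V →ₗ[ℝ] V →ₗ[ℝ] V) (st : V →ₗ[ℝ] V) : Set V :=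
  {y | ∃ x, st x = x ∧ Function.Bijective (Pq mul x) ∧ y = mul x x}

/-- The Jordan triple product `{x,y,z} = (xy⋆)z + x(y⋆z) − y⋆(xz)`. -/
def trip (mul : V →ₗ[ℝ] V →ₗ[ℝ] V) (st : V →ₗ[ℝ] V) (x y z : V) : V :=
  mul (mul x (st y)) z + mul x (mul (st y) z) - mul (st y) (mul x z)

/-! Specialising `g{x,y,z} = {gx,gy,gz}` to `x = z = e` gives `g(y⋆) = P(ge)(gy)⋆`, because
`{e,y,e} = y⋆` and `{x,y,x} = P(x)y⋆`. As `y ↦ g(y⋆)` is onto, `P(ge)` is onto, hence bijective,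
and taking `y = e` (with `e⋆ = e`) gives `P(ge)(ge)⋆ = ge`, so `(ge)⋆ = P(ge)⁻¹(ge)`. -/

section TripleProduct

variable (mul : V →ₗ[ℝ] V →ₗ[ℝ] V) (st : V →ₗ[ℝ] V)

theorem trip_self_eq_Pq (hcomm : ∀ x y : V, mul x y = mul y x) (x y : V) :
    trip mul st x y x = Pq mul x (st y) := by
  simp only [trip, Pq, two_smul, LinearMap.sub_apply, LinearMap.add_apply, LinearMap.comp_apply]
  rw [hcomm (mul x (st y)) x, hcomm (st y) x, hcomm (st y) (mul x x)]

theorem trip_unit_unit {e : V} (hcomm : ∀ x y : V, mul x y = mul y x)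
    (hunit : ∀ x : V, mul e x = x) (y : V) : trip mul st e y e = st y := by
  simp only [trip, hunit, hcomm _ e]
  abel

theorem star_unit {e : V} (hcomm : ∀ x y : V, mul x y = mul y x)
    (hunit : ∀ x : V, mul e x = x) (hst_invol : ∀ x : V, st (st x) = x)
    (hst_mul : ∀ x y : V, st (mul x y) = mul (st x) (st y)) : st e = e := by
  have h := hst_mul e (st e)
  rwa [hunit, hst_invol, hcomm, hunit, eq_comm] at h

theorem Pq_map_unit_star_apply {e : V} (hcomm : ∀ x y : V, mul x y = mul y x)
    (hunit : ∀ x : V, mul e x = x) (g : V →ₗ[ℝ] V)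
    (htrip : ∀ x y z : V, g (trip mul st x y z) = trip mul st (g x) (g y) (g z)) (y : V) :
    Pq mul (g e) (st (g y)) = g (st y) := by
  rw [← trip_self_eq_Pq mul st hcomm, ← htrip, trip_unit_unit mul st hcomm hunit]

end TripleProduct

theorem jinv_eq_of_Pq_apply {mul : V →ₗ[ℝ] V →ₗ[ℝ] V} {x y : V}
    (hx : Function.Bijective (Pq mul x)) (hy : Pq mul x y = x) : jinv mul x = y := by
  rw [jinv, dif_pos hx, LinearEquiv.symm_apply_eq, LinearEquiv.ofBijective_apply, hy]

theorem stmt8_general {V : Type} [AddCommGroup V] [Module ℝ V] [FiniteDimensional ℝ V]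
    (mul : V →ₗ[ℝ] V →ₗ[ℝ] V) (e : V)
    (hcomm : ∀ x y : V, mul x y = mul y x)
    (hunit : ∀ x : V, mul e x = x)
    (st : V →ₗ[ℝ] V)
    (hst_invol : ∀ x : V, st (st x) = x)
    (hst_mul : ∀ x y : V, st (mul x y) = mul (st x) (st y))
    (g : V →ₗ[ℝ] V) (hg : Function.Bijective g)
    (htrip : ∀ x y z : V, g (trip mul st x y z) = trip mul st (g x) (g y) (g z)) :
    Function.Bijective (Pq mul (g e)) ∧ jinv mul (g e) = st (g e) := by
  have hPq_star := Pq_map_unit_star_apply mul st hcomm hunit g htrip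
  have hsurj : Function.Surjective (Pq mul (g e)) := by
    intro z
    obtain ⟨w, rfl⟩ := hg.2 z
    exact ⟨st (g (st w)), by rw [hPq_star, hst_invol]⟩
  have hbij : Function.Bijective (Pq mul (g e)) :=
    ⟨LinearMap.injective_iff_surjective.mpr hsurj, hsurj⟩
  refine ⟨hbij, jinv_eq_of_Pq_apply hbij ?_⟩
  rw [hPq_star, star_unit mul st hcomm hunit hst_invol hst_mul]

theorem stmt8 {V : Type} [AddCommGroup V] [Module ℝ V] [FiniteDimensional ℝ V]
    (mul : V →ₗ[ℝ] V →ₗ[ℝ] V) (e : V)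
    (hcomm : ∀ x y : V, mul x y = mul y x)
    (hunit : ∀ x : V, mul e x = x)
    (hjordan : ∀ x y : V, mul x (mul (mul x x) y) = mul (mul x x) (mul x y))
    (st : V →ₗ[ℝ] V)
    (hst_invol : ∀ x : V, st (st x) = x)
    (hst_mul : ∀ x y : V, st (mul x y) = mul (st x) (st y))
    (hα_nondeg : ∀ x : V, (∀ y : V, αf mul x y = 0) → x = 0)
    (hα_pos : ∀ x : V, st x = x → x ≠ 0 → 0 < αf mul x x)
    (hα_neg : ∀ x : V, st x = -x → x ≠ 0 → αf mul x x < 0)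
    (g : V →ₗ[ℝ] V) (hg : Function.Bijective g)
    (htrip : ∀ x y z : V, g (trip mul st x y z) = trip mul st (g x) (g y) (g z)) :
    Function.Bijective (Pq mul (g e)) ∧ jinv mul (g e) = st (g e) :=
  stmt8_general mul e hcomm hunit st hst_invol hst_mul g hg htrip
end
end

section
/- The bilinear form β(x,y) := Tr(x□y), where x□y := L(xy⋆) + L(x)∘L(y⋆) − L(y⋆)∘L(x), satisfies β(x,y) = α(x,y⋆) for all x,y ∈ V, is symmetric, and is positive definite on V. -/
noncomputable section
open scoped Classical

open Function

variable {V : Type} [AddCommGroup V] [Module ℝ V]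

/-! Traces of commutators vanish, so `β(x, y) = Tr L(x y⋆) = α(x, y⋆)`. Since `⋆` is an algebra
involution, `L(z⋆) = ⋆ ∘ L(z) ∘ ⋆` is conjugate to `L(z)`, hence `α` is `⋆`-invariant, and together
with commutativity this makes `β` symmetric. For positivity split `x = a + b` with `a ∈ V⁺`,
`b ∈ V⁻`; then `x⋆ = a - b` and `α(x, x⋆) = α(a, a) - α(b, b)`, which is positive unless
`a = b = 0`. -/

namespace LinearMap

theorem trace_add_comp_sub_comp {R M : Type*} [CommRing R] [AddCommGroup M] [Module R M]
    [Module.Free R M] [Module.Finite R M] (f g h : M →ₗ[R] M) :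
    trace R M (f + g ∘ₗ h - h ∘ₗ g) = trace R M f := by
  rw [map_sub, map_add, trace_comp_comm', add_sub_cancel_right]

theorem trace_conj_of_involutive {R M : Type*} [CommRing R] [AddCommGroup M] [Module R M]
    {σ : M →ₗ[R] M} (hσ : Involutive σ) (f : M →ₗ[R] M) :
    trace R M (σ ∘ₗ f ∘ₗ σ) = trace R M f :=
  trace_conj' f (LinearEquiv.ofInvolutive σ hσ)

end LinearMap

section TraceForm

variable {mul : V →ₗ[ℝ] V →ₗ[ℝ] V} {st : V →ₗ[ℝ] V}

theorem αf_comm (hcomm : ∀ x y : V, mul x y = mul y x) (x y : V) :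
    αf mul x y = αf mul y x := by
  rw [αf, αf, hcomm]

theorem trace_mul_star (hst_invol : Involutive st)
    (hst_mul : ∀ x y : V, st (mul x y) = mul (st x) (st y)) (z : V) :
    LinearMap.trace ℝ V (mul (st z)) = LinearMap.trace ℝ V (mul z) := by
  have hconj : mul (st z) = st ∘ₗ mul z ∘ₗ st := by
    ext w
    simp [hst_mul, hst_invol w]
  rw [hconj, LinearMap.trace_conj_of_involutive hst_invol]

theorem αf_star_star (hst_invol : Involutive st)
    (hst_mul : ∀ x y : V, st (mul x y) = mul (st x) (st y)) (x y : V) :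
    αf mul (st x) (st y) = αf mul x y := by
  rw [αf, ← hst_mul, trace_mul_star hst_invol hst_mul, αf]

theorem αf_star_comm (hcomm : ∀ x y : V, mul x y = mul y x) (hst_invol : Involutive st)
    (hst_mul : ∀ x y : V, st (mul x y) = mul (st x) (st y)) (x y : V) :
    αf mul x (st y) = αf mul y (st x) := by
  rw [← αf_star_star hst_invol hst_mul, hst_invol, αf_comm hcomm]

theorem αf_add_sub (hcomm : ∀ x y : V, mul x y = mul y x) (a b : V) :
    αf mul (a + b) (a - b) = αf mul a a - αf mul b b := by
  simp only [αf, map_add, map_sub, LinearMap.add_apply, hcomm b a]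
  ring

theorem αf_self_star_pos (hcomm : ∀ x y : V, mul x y = mul y x) (hst_invol : Involutive st)
    (hα_pos : ∀ x : V, st x = x → x ≠ 0 → 0 < αf mul x x)
    (hα_neg : ∀ x : V, st x = -x → x ≠ 0 → αf mul x x < 0) {x : V} (hx : x ≠ 0) :
    0 < αf mul x (st x) := by
  set a := (2 : ℝ)⁻¹ • (x + st x)
  set b := (2 : ℝ)⁻¹ • (x - st x)
  have hx_eq : x = a + b := by module
  have hstx_eq : st x = a - b := by module
  have hst_a : st a = a := by simp only [a, map_smul, map_add, hst_invol x, add_comm]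
  have hst_b : st b = -b := by simp only [b, map_smul, map_sub, hst_invol x]; module
  have ha : 0 ≤ αf mul a a := by
    rcases eq_or_ne a 0 with h | h
    · simp [h, αf]
    · exact (hα_pos a hst_a h).le
  have hb : αf mul b b ≤ 0 := by
    rcases eq_or_ne b 0 with h | h
    · simp [h, αf]
    · exact (hα_neg b hst_b h).le
  have hab : a ≠ 0 ∨ b ≠ 0 := by
    contrapose! hx
    rw [hx_eq, hx.1, hx.2, add_zero]
  rw [hstx_eq, hx_eq, αf_add_sub hcomm]
  rcases hab with h | h
  · linarith [hα_pos a hst_a h]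
  · linarith [hα_neg b hst_b h]

end TraceForm

theorem stmt9_general {V : Type} [AddCommGroup V] [Module ℝ V] [FiniteDimensional ℝ V]
    (mul : V →ₗ[ℝ] V →ₗ[ℝ] V)
    (hcomm : ∀ x y : V, mul x y = mul y x)
    (st : V →ₗ[ℝ] V)
    (hst_invol : ∀ x : V, st (st x) = x)
    (hst_mul : ∀ x y : V, st (mul x y) = mul (st x) (st y))
    (hα_pos : ∀ x : V, st x = x → x ≠ 0 → 0 < αf mul x x)
    (hα_neg : ∀ x : V, st x = -x → x ≠ 0 → αf mul x x < 0)
 :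
    (∀ x y : V,
      LinearMap.trace ℝ V (mul (mul x (st y)) + mul x ∘ₗ mul (st y) - mul (st y) ∘ₗ mul x) =
        αf mul x (st y)) ∧
    (∀ x y : V,
      LinearMap.trace ℝ V (mul (mul x (st y)) + mul x ∘ₗ mul (st y) - mul (st y) ∘ₗ mul x) =
        LinearMap.trace ℝ V (mul (mul y (st x)) + mul y ∘ₗ mul (st x) - mul (st x) ∘ₗ mul y)) ∧
    (∀ x : V, x ≠ 0 →
      0 < LinearMap.trace ℝ V
        (mul (mul x (st x)) + mul x ∘ₗ mul (st x) - mul (st x) ∘ₗ mul x)) := by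
  have hβ : ∀ x y : V,
      LinearMap.trace ℝ V (mul (mul x (st y)) + mul x ∘ₗ mul (st y) - mul (st y) ∘ₗ mul x) =
        αf mul x (st y) := fun x y => LinearMap.trace_add_comp_sub_comp _ _ _
  refine ⟨hβ, fun x y => ?_, fun x hx => ?_⟩
  · rw [hβ, hβ, αf_star_comm hcomm hst_invol hst_mul]
  · rw [hβ]
    exact αf_self_star_pos hcomm hst_invol hα_pos hα_neg hx

theorem stmt9 {V : Type} [AddCommGroup V] [Module ℝ V] [FiniteDimensional ℝ V]
    (mul : V →ₗ[ℝ] V →ₗ[ℝ] V) (e : V)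
    (hcomm : ∀ x y : V, mul x y = mul y x)
    (hunit : ∀ x : V, mul e x = x)
    (hjordan : ∀ x y : V, mul x (mul (mul x x) y) = mul (mul x x) (mul x y))
    (st : V →ₗ[ℝ] V)
    (hst_invol : ∀ x : V, st (st x) = x)
    (hst_mul : ∀ x y : V, st (mul x y) = mul (st x) (st y))
    (hα_nondeg : ∀ x : V, (∀ y : V, αf mul x y = 0) → x = 0)
    (hα_pos : ∀ x : V, st x = x → x ≠ 0 → 0 < αf mul x x)
    (hα_neg : ∀ x : V, st x = -x → x ≠ 0 → αf mul x x < 0)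
 :
    (∀ x y : V,
      LinearMap.trace ℝ V (mul (mul x (st y)) + mul x ∘ₗ mul (st y) - mul (st y) ∘ₗ mul x) =
        αf mul x (st y)) ∧
    (∀ x y : V,
      LinearMap.trace ℝ V (mul (mul x (st y)) + mul x ∘ₗ mul (st y) - mul (st y) ∘ₗ mul x) =
        LinearMap.trace ℝ V (mul (mul y (st x)) + mul y ∘ₗ mul (st x) - mul (st x) ∘ₗ mul y)) ∧
    (∀ x : V, x ≠ 0 →
      0 < LinearMap.trace ℝ V
        (mul (mul x (st x)) + mul x ∘ₗ mul (st x) - mul (st x) ∘ₗ mul x)) :=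
  stmt9_general mul hcomm st hst_invol hst_mul hα_pos hα_neg
end
end
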